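/- arXiv:1009.2097 — 7 statements merged into one kernel-verified Lean document; each statement's English description precedes it below -/
import Mathlib

section
/- If z : ℝ → ℂ satisfies the ODE dz/dt = M / conj(z(t)) with M : ℂ, Re M ≠ 0, and z(0) ≠ 0, then the function z(t) = T(t) · exp(i · (Im M / Re M) · log T(t)) · z(0), where T(t) = sqrt(1 + (Re M)·t/(|z(0)|²/2)), solves the ODE on the interval where 1 + (Re M)·t/(|z(0)|²/2) > 0. -/
open Complex ComplexConjugate

/-! The formula is `z(t) = T(t)^(1 + i k) z(0)` with `k = Im M / Re M`, written through `exp ∘ log`.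
Its logarithmic derivative is `(1 + i k) T'/T = (1 + i k) Re M / (2 a T²)` with `a = |z(0)|²/2`,
while `M / conj z = M z / |z|² = M z / (2 a T²)`; the two agree because `(1 + i k) Re M = M`. -/

theorem HasDerivAt.ofReal_mul_cexp_I_mul_log {T : ℝ → ℝ} {T' t : ℝ} (k : ℝ)
    (hT : HasDerivAt T T' t) (hpos : 0 < T t) :
    HasDerivAt (fun x => (T x : ℂ) * cexp (I * k * Real.log (T x)))
      ((1 + I * k) * (T' / T t : ℝ) * ((T t : ℂ) * cexp (I * k * Real.log (T t)))) t := by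
  have hphase := (((hT.log hpos.ne').ofReal_comp).const_mul (I * k)).cexp
  refine (hT.ofReal_comp.mul hphase).congr_deriv ?_
  have hTC : (T t : ℂ) ≠ 0 := ofReal_ne_zero.2 hpos.ne'
  push_cast
  field_simp

theorem Complex.div_conj_eq_mul_div_normSq (M w : ℂ) : M / conj w = M * w / (normSq w : ℂ) := by
  rw [div_eq_mul_inv, inv_def, conj_conj, normSq_conj, ofReal_inv]
  ring

theorem Complex.norm_ofReal_mul_cexp_I_mul_mul (r k L : ℝ) (w : ℂ) :
    ‖(r : ℂ) * cexp (I * k * L) * w‖ = |r| * ‖w‖ := by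
  have harg : I * k * L = ((k * L : ℝ) : ℂ) * I := by push_cast; ring
  rw [harg, norm_mul, norm_mul, norm_exp_ofReal_mul_I, norm_real, Real.norm_eq_abs, mul_one]

/-- The explicit self-similar formula solves `dz/dt = M / conj z` on the
interval where `1 + (Re M) t / (|z(0)|²/2) > 0`, when `Re M ≠ 0`. -/
theorem stmt0 (M z0 : ℂ) (hM : M.re ≠ 0) (hz0 : z0 ≠ 0)
    (T : ℝ → ℝ) (hT : ∀ t, T t = Real.sqrt (1 + M.re * t / (‖z0‖ ^ 2 / 2)))
    (z : ℝ → ℂ)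
    (hz : ∀ t, z t = (T t : ℂ) * Complex.exp (Complex.I * (M.im / M.re) * Real.log (T t)) * z0) :
    ∀ t : ℝ, 1 + M.re * t / (‖z0‖ ^ 2 / 2) > 0 →
      HasDerivAt z (M / conj (z t)) t := by
  intro t hu
  set k := M.im / M.re
  have hTt : 0 < T t := hT t ▸ Real.sqrt_pos.2 hu
  have hTderiv : HasDerivAt T (M.re / (‖z0‖ ^ 2 / 2) / (2 * T t)) t := by
    convert ((((hasDerivAt_id t).const_mul M.re).div_const _).const_add 1).sqrt hu.ne' using 1
    · exact funext hT
    · simp [hT t]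
  have hzfun : z = fun x => (T x : ℂ) * cexp (I * (k : ℝ) * Real.log (T x)) * z0 :=
    funext fun x => by rw [hz, ofReal_div]
  have hM_eq : M = M.re * (1 + I * (k : ℝ)) := by
    apply Complex.ext <;> simp [k, field]
  have hval : M / conj (z t) = (1 + I * (k : ℝ)) * (M.re / (‖z0‖ ^ 2 / 2) / (2 * T t) / T t : ℝ) *
      ((T t : ℂ) * cexp (I * (k : ℝ) * Real.log (T t))) * z0 := by
    rw [div_conj_eq_mul_div_normSq, normSq_eq_norm_sq, hzfun, norm_ofReal_mul_cexp_I_mul_mul,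
      abs_of_pos hTt, mul_pow]
    have hTC : (T t : ℂ) ≠ 0 := ofReal_ne_zero.2 hTt.ne'
    have hz0C : ((‖z0‖ : ℝ) : ℂ) ≠ 0 := ofReal_ne_zero.2 (norm_ne_zero_iff.2 hz0)
    nth_rewrite 1 [hM_eq]
    push_cast
    field_simp
  rw [hval, hzfun]
  exact (hTderiv.ofReal_mul_cexp_I_mul_log k hTt).mul_const z0
end

section
/- If z : ℝ → ℂ satisfies dz/dt = M / conj(z(t)) with M purely imaginary (Re M = 0) and z(0) ≠ 0, then z(t) = exp(i · (Im M / |z(0)|²) · t) · z(0) for all t; in particular |z(t)| = |z(0)| for all t. -/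
/-!
Since `z' · conj z = M` is purely imaginary, `|z|²` has derivative `2 Re M = 0`, so `|z| = |z 0|`.
Then `M / conj z = (M / |z 0|²) · z`, a linear equation whose solutions are `exp (M t / |z 0|²) · z 0`,
and `M = i Im M`.
-/

open Complex ComplexConjugate

theorem HasDerivAt.mul_conj_self {z : ℝ → ℂ} {w : ℂ} {t : ℝ} (h : HasDerivAt z w t) :
    HasDerivAt (fun s => z s * conj (z s)) (w * conj (z t) + z t * conj w) t :=
  h.mul h.star

theorem norm_eq_norm_of_hasDerivAt_div_conj {M : ℂ} (hM : M.re = 0) {z : ℝ → ℂ}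
    (hz : ∀ t, z t ≠ 0) (hode : ∀ t, HasDerivAt z (M / conj (z t)) t) (s t : ℝ) :
    ‖z s‖ = ‖z t‖ := by
  have hderiv : ∀ t, HasDerivAt (fun s => z s * conj (z s)) 0 t := fun t => by
    have hzc : conj (z t) ≠ 0 := (map_ne_zero _).mpr (hz t)
    convert (hode t).mul_conj_self using 1
    rw [div_mul_cancel₀ _ hzc, map_div₀, conj_conj, mul_div_cancel₀ _ (hz t), add_conj, hM]
    simp
  have hconst := is_const_of_deriv_eq_zero (fun s => (hderiv s).differentiableAt)
    (fun s => (hderiv s).deriv) s t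
  simp only [mul_conj'] at hconst
  exact (pow_left_inj₀ (norm_nonneg _) (norm_nonneg _) two_ne_zero).mp (mod_cast hconst)

theorem div_conj_eq_div_norm_sq_mul (M : ℂ) {w : ℂ} (hw : w ≠ 0) :
    M / conj w = M / (‖w‖ : ℂ) ^ 2 * w := by
  rw [← mul_conj', div_mul_eq_mul_div, mul_comm w, mul_div_mul_right _ _ hw]

theorem eq_exp_mul_of_hasDerivAt_const_mul {ω : ℂ} {z : ℝ → ℂ}
    (hode : ∀ t, HasDerivAt z (ω * z t) t) (t : ℝ) : z t = exp (ω * t) * z 0 := by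
  have hexp : ∀ t : ℝ, HasDerivAt (fun s : ℝ => exp (-(ω * s))) (exp (-(ω * t)) * -ω) t :=
    fun t => by simpa using (((hasDerivAt_id t).ofReal_comp).const_mul ω).neg.cexp
  have hderiv : ∀ t, HasDerivAt (fun s : ℝ => exp (-(ω * s)) * z s) 0 t := fun t =>
    ((hexp t).mul (hode t)).congr_deriv (by ring)
  have hconst := is_const_of_deriv_eq_zero (fun s => (hderiv s).differentiableAt)
    (fun s => (hderiv s).deriv) t 0
  simp only [ofReal_zero, mul_zero, neg_zero, exp_zero, one_mul] at hconst
  rw [← hconst, ← mul_assoc, ← exp_add, add_neg_cancel, exp_zero, one_mul]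

theorem stmt1_general (M : ℂ) (hM : M.re = 0) (z : ℝ → ℂ)
    (hz : ∀ t, z t ≠ 0)
    (hode : ∀ t, HasDerivAt z (M / conj (z t)) t) :
    (∀ t : ℝ, z t = Complex.exp (Complex.I * (M.im / ‖z 0‖ ^ 2) * t) * z 0) ∧
      (∀ t : ℝ, ‖z t‖ = ‖z 0‖) := by
  have hnorm : ∀ t, ‖z t‖ = ‖z 0‖ := fun t =>
    norm_eq_norm_of_hasDerivAt_div_conj hM hz hode t 0
  have hlin : ∀ t, HasDerivAt z (M / (‖z 0‖ : ℂ) ^ 2 * z t) t := fun t => by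
    rw [← hnorm t, ← div_conj_eq_div_norm_sq_mul M (hz t)]
    exact hode t
  have hM_eq : M = M.im * I := by simpa [hM] using (re_add_im M).symm
  refine ⟨fun t => ?_, hnorm⟩
  rw [eq_exp_mul_of_hasDerivAt_const_mul hlin t]
  nth_rewrite 1 [hM_eq]
  ring_nf

/-- Purely rotational self-similar motion: with `Re M = 0`, a solution of
`dz/dt = M / conj z` spins rigidly. -/
theorem stmt1 (M : ℂ) (hM : M.re = 0) (z : ℝ → ℂ) (hz0 : z 0 ≠ 0)
    (hz : ∀ t, z t ≠ 0)
    (hode : ∀ t, HasDerivAt z (M / conj (z t)) t) :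
    (∀ t : ℝ, z t = Complex.exp (Complex.I * (M.im / ‖z 0‖ ^ 2) * t) * z 0) ∧
      (∀ t : ℝ, ‖z t‖ = ‖z 0‖) :=
  stmt1_general M hM z hz hode
end

section
/- If z : ℝ → ℂ satisfies dz/dt = M / conj(z(t)) with Re M < 0 and z(0) ≠ 0, then z(t) → 0 as t → t_c⁻ where t_c = -|z(0)|²/(2 Re M) > 0; i.e., the solution collapses to the origin in finite time. -/
/-!
Along `z' = M / conj z` the squared modulus has the constant derivative
`2 ⟪z, M / conj z⟫_ℝ = 2 Re (conj z · M / conj z) = 2 Re M`, so `|z(t)|² = |z(0)|² + 2 (Re M) t = 2 (Re M) (t - t_c)`,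
which decreases linearly to `0` at `t_c`.
-/

open Complex ComplexConjugate Set Filter Topology RealInnerProductSpace

theorem HasDerivAt.norm_sq_of_eq_div_conj {z : ℝ → ℂ} {M : ℂ} {t : ℝ} (hzt : z t ≠ 0)
    (hz : HasDerivAt z (M / conj (z t)) t) :
    HasDerivAt (fun s => ‖z s‖ ^ 2) (2 * M.re) t := by
  have hinner : ⟪z t, M / conj (z t)⟫ = M.re := by
    rw [Complex.inner, div_mul_cancel₀ M ((map_ne_zero conj).mpr hzt)]
  simpa only [hinner] using hz.norm_sq

theorem eq_add_mul_sub_of_hasDerivAt_const {f : ℝ → ℝ} {a b c : ℝ}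
    (hf : ∀ t ∈ Ico a b, HasDerivAt f c t) : ∀ t ∈ Ico a b, f t = f a + c * (t - a) := by
  intro t ht
  have hsub : Icc a t ⊆ Ico a b := Icc_subset_Ico_right ht.2
  have hline : ∀ s, HasDerivAt (fun s => f a + c * (s - a)) c s := fun s => by
    simpa using ((hasDerivAt_id s).sub_const a).const_mul c |>.const_add (f a)
  refine eq_of_has_deriv_right_eq (f' := fun _ => c)
    (fun s hs => (hf s (hsub (Ico_subset_Icc_self hs))).hasDerivWithinAt)
    (fun s _ => (hline s).hasDerivWithinAt)
    (fun s hs => (hf s (hsub hs)).continuousAt.continuousWithinAt)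
    (fun s _ => (hline s).continuousAt.continuousWithinAt)
    (by simp) t (right_mem_Icc.mpr ht.1)

/-- Finite-time collapse: with `Re M < 0`, a solution of `dz/dt = M / conj z`
tends to `0` as `t → t_c⁻`, where `t_c = -|z(0)|²/(2 Re M)`. -/
theorem stmt2 (M : ℂ) (hM : M.re < 0) (z : ℝ → ℂ) (hz0 : z 0 ≠ 0)
    (tc : ℝ) (htc : tc = -(‖z 0‖) ^ 2 / (2 * M.re))
    (hz : ∀ t ∈ Set.Ico (0 : ℝ) tc, z t ≠ 0)
    (hode : ∀ t ∈ Set.Ico (0 : ℝ) tc, HasDerivAt z (M / conj (z t)) t) :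
    0 < tc ∧ Filter.Tendsto z (nhdsWithin tc (Set.Ico 0 tc)) (nhds 0) := by
  have hnorm0 : 0 < ‖z 0‖ := norm_pos_iff.mpr hz0
  have htc_pos : 0 < tc := htc ▸ div_pos_of_neg_of_neg (by nlinarith) (by linarith)
  refine ⟨htc_pos, ?_⟩
  have hnorm_sq : ∀ t ∈ Ico 0 tc, ‖z t‖ ^ 2 = 2 * M.re * (t - tc) := fun t ht => by
    have := eq_add_mul_sub_of_hasDerivAt_const
      (fun s hs => (hode s hs).norm_sq_of_eq_div_conj (hz s hs)) t ht
    have hre : M.re ≠ 0 := hM.ne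
    rw [this, htc]
    field_simp
    ring
  have hlim : Tendsto (fun t => √(2 * M.re * (t - tc))) (𝓝[Ico 0 tc] tc) (𝓝 0) := by
    have hcont : Continuous fun t : ℝ => √(2 * M.re * (t - tc)) := by fun_prop
    simpa using (hcont.tendsto tc).mono_left nhdsWithin_le_nhds
  rw [tendsto_zero_iff_norm_tendsto_zero]
  refine hlim.congr' ?_
  filter_upwards [self_mem_nhdsWithin] with t ht
  rw [← hnorm_sq t ht, Real.sqrt_sq (norm_nonneg _)]
end

section
/- Consider two poles z, z' : ℝ → ℂ with fixed complex strengths μ, μ' evolving by dz/dt = conj(μ')/(conj(z) - conj(z')) and dz'/dt = conj(μ)/(conj(z') - conj(z)). Then d/dt |z(t) - z'(t)|² = 2 Re(μ + μ'). In particular, if Re(μ + μ') = 0 the distance |z - z'| is constant in time. -/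
open Complex ComplexConjugate

/-! The difference `w = z - z'` obeys `w' = conj (μ + μ') / conj w`, so
`d/dt |w|² = 2 Re (conj w · w') = 2 Re (conj (μ + μ')) = 2 Re (μ + μ')`. -/

theorem hasDerivAt_sub_of_pole_pair {μ μ' : ℂ} {z z' : ℝ → ℂ} {t : ℝ}
    (hz : HasDerivAt z (conj μ' / (conj (z t) - conj (z' t))) t)
    (hz' : HasDerivAt z' (conj μ / (conj (z' t) - conj (z t))) t) :
    HasDerivAt (fun s => z s - z' s) (conj (μ + μ') / conj (z t - z' t)) t := by
  refine (hz.sub hz').congr_deriv ?_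
  rw [map_add, map_sub, ← neg_sub (conj (z t)), div_neg, sub_neg_eq_add, add_comm, add_div]

theorem hasDerivAt_norm_sq_of_hasDerivAt_conj_div {w : ℝ → ℂ} {c : ℂ} {t : ℝ}
    (hw : w t ≠ 0) (h : HasDerivAt w (conj c / conj (w t)) t) :
    HasDerivAt (fun s => ‖w s‖ ^ 2) (2 * c.re) t := by
  convert h.norm_sq using 2
  rw [Complex.inner, div_mul_cancel₀ _ ((map_ne_zero _).mpr hw), conj_re]

theorem norm_eq_of_hasDerivAt_norm_sq_zero {w : ℝ → ℂ}
    (h : ∀ t, HasDerivAt (fun s => ‖w s‖ ^ 2) 0 t) (t₀ t₁ : ℝ) : ‖w t₀‖ = ‖w t₁‖ := by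
  have hsq := is_const_of_deriv_eq_zero (fun s => (h s).differentiableAt)
    (fun s => (h s).deriv) t₀ t₁
  exact (pow_left_inj₀ (norm_nonneg _) (norm_nonneg _) two_ne_zero).mp hsq

/-- For a pole pair with fixed strengths `μ, μ'`, the squared distance evolves
at the constant rate `2 Re(μ + μ')`. -/
theorem stmt3 (μ μ' : ℂ) (z z' : ℝ → ℂ) (hne : ∀ t, z t ≠ z' t)
    (hz : ∀ t, HasDerivAt z (conj μ' / (conj (z t) - conj (z' t))) t)
    (hz' : ∀ t, HasDerivAt z' (conj μ / (conj (z' t) - conj (z t))) t) :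
    (∀ t, HasDerivAt (fun s => (‖z s - z' s‖) ^ 2) (2 * (μ + μ').re) t) ∧
      ((μ + μ').re = 0 →
        ∀ t, ‖z t - z' t‖ = ‖z 0 - z' 0‖) := by
  have rate : ∀ t, HasDerivAt (fun s => (‖z s - z' s‖) ^ 2) (2 * (μ + μ').re) t := fun t =>
    hasDerivAt_norm_sq_of_hasDerivAt_conj_div (sub_ne_zero.mpr (hne t))
      (hasDerivAt_sub_of_pole_pair (hz t) (hz' t))
  refine ⟨rate, fun hre t => norm_eq_of_hasDerivAt_norm_sq_zero (w := fun s => z s - z' s) ?_ t 0⟩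
  simpa [hre] using rate
end

section
/- Consider N poles z_1, ..., z_N : ℝ → ℂ with fixed strengths μ^i, evolving by dz_i/dt = Σ_{j ≠ i} conj(μ^j)/(conj(z_i) - conj(z_j)). If Σ_i μ^i = 0, and I ⊔ I' is a partition of {1,...,N} with μ_I := Σ_{i∈I} μ^i ≠ 0 (so μ_{I'} = -μ_I ≠ 0), then the difference of subcenters (Σ_{i∈I} conj(μ^i) z_i)/conj(μ_I) - (Σ_{i∈I'} conj(μ^i) z_i)/conj(μ_{I'}) is constant in time. -/
/-!
The interaction `conj μ_i conj μ_j / (conj z_i - conj z_j)` is antisymmetric in `i, j`, so the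
weighted center `∑ i, conj μ_i z_i` is conserved. Since `μ_{I'} = -μ_I`, the difference of the
two subcenters is exactly this weighted center divided by `conj μ_I`.
-/

open Complex ComplexConjugate

theorem Finset.sum_sum_filter_ne_eq_zero_of_antisymm {ι M : Type*} [DecidableEq ι]
    [AddCommGroup M] (s : Finset ι) (f : ι → ι → M) (hf : ∀ i j, i ≠ j → f i j = -f j i) :
    ∑ i ∈ s, ∑ j ∈ s with j ≠ i, f i j = 0 := by
  simp_rw [Finset.sum_filter]
  rw [← Finset.sum_product' (f := fun i j => if j ≠ i then f i j else 0)]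
  refine Finset.sum_involution (fun x _ => x.swap) ?_ ?_ ?_ ?_
  · rintro ⟨i, j⟩ -
    by_cases hij : j = i
    · simp [hij]
    · simp [hij, Ne.symm hij, hf i j (Ne.symm hij)]
  · rintro ⟨i, j⟩ - hne hswap
    obtain rfl : j = i := congrArg Prod.fst hswap
    simp at hne
  · rintro ⟨i, j⟩ h
    simpa [and_comm] using h
  · intro x _
    rfl

theorem sum_mul_sum_ne_div_sub_eq_zero {ι K : Type*} [Fintype ι] [DecidableEq ι] [Field K]
    (a w : ι → K) :
    ∑ i, a i * ∑ j ∈ Finset.univ.filter (· ≠ i), a j / (w i - w j) = 0 := by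
  simp_rw [Finset.mul_sum]
  refine Finset.sum_sum_filter_ne_eq_zero_of_antisymm _ _ fun i j _ => ?_
  rw [← neg_sub (w i), div_neg]
  ring

theorem hasDerivAt_sum_conj_mul_eq_zero {N : ℕ} {z : Fin N → ℝ → ℂ} {μ : Fin N → ℂ}
    (hode : ∀ i, ∀ t, HasDerivAt (z i)
      (∑ j ∈ Finset.univ.filter (· ≠ i), conj (μ j) / (conj (z i t) - conj (z j t))) t)
    (t : ℝ) : HasDerivAt (fun t => ∑ i, conj (μ i) * z i t) 0 t := by
  have h := HasDerivAt.fun_sum fun i (_ : i ∈ Finset.univ) => (hode i t).const_mul (conj (μ i))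
  rwa [sum_mul_sum_ne_div_sub_eq_zero (fun i => conj (μ i)) (fun i => conj (z i t))] at h

theorem div_sub_div_neg_eq_add_div {K : Type*} [Field K] (a b c : K) :
    a / c - b / -c = (a + b) / c := by
  rw [div_neg, sub_neg_eq_add, add_div]

theorem stmt6_general (N : ℕ) (z : Fin N → ℝ → ℂ) (μ : Fin N → ℂ)
    (hode : ∀ i, ∀ t, HasDerivAt (z i)
      (∑ j ∈ Finset.univ.filter (· ≠ i),
        conj (μ j) / (conj (z i t) - conj (z j t))) t)
    (hsum : ∑ i, μ i = 0)
    (I : Finset (Fin N)) :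
    ∀ t : ℝ,
      (∑ i ∈ I, conj (μ i) * z i t) / conj (∑ i ∈ I, μ i)
        - (∑ i ∈ Iᶜ, conj (μ i) * z i t) / conj (∑ i ∈ Iᶜ, μ i)
      = (∑ i ∈ I, conj (μ i) * z i 0) / conj (∑ i ∈ I, μ i)
        - (∑ i ∈ Iᶜ, conj (μ i) * z i 0) / conj (∑ i ∈ Iᶜ, μ i) := by
  intro t
  have hcompl : ∑ i ∈ Iᶜ, μ i = -∑ i ∈ I, μ i :=
    eq_neg_of_add_eq_zero_right ((Finset.sum_add_sum_compl I μ).trans hsum)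
  have hcenter := is_const_of_deriv_eq_zero
    (fun s => (hasDerivAt_sum_conj_mul_eq_zero hode s).differentiableAt)
    (fun s => (hasDerivAt_sum_conj_mul_eq_zero hode s).deriv) t 0
  simp only [hcompl, map_neg, div_sub_div_neg_eq_add_div, Finset.sum_add_sum_compl]
  rw [hcenter]

/-- When the total strength vanishes, the difference of the subcenters of any
partition with nonzero partial strengths is conserved. -/
theorem stmt6 (N : ℕ) (z : Fin N → ℝ → ℂ) (μ : Fin N → ℂ)
    (hdist : ∀ t, ∀ i j, i ≠ j → z i t ≠ z j t)
    (hode : ∀ i, ∀ t, HasDerivAt (z i)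
      (∑ j ∈ Finset.univ.filter (· ≠ i),
        conj (μ j) / (conj (z i t) - conj (z j t))) t)
    (hsum : ∑ i, μ i = 0)
    (I : Finset (Fin N)) (hI : ∑ i ∈ I, μ i ≠ 0) (hI' : ∑ i ∈ Iᶜ, μ i ≠ 0) :
    ∀ t : ℝ,
      (∑ i ∈ I, conj (μ i) * z i t) / conj (∑ i ∈ I, μ i)
        - (∑ i ∈ Iᶜ, conj (μ i) * z i t) / conj (∑ i ∈ Iᶜ, μ i)
      = (∑ i ∈ I, conj (μ i) * z i 0) / conj (∑ i ∈ I, μ i)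
        - (∑ i ∈ Iᶜ, conj (μ i) * z i 0) / conj (∑ i ∈ Iᶜ, μ i) :=
  stmt6_general N z μ hode hsum I
end

section
/- Consider two poles with fixed strengths μ, μ' evolving by dz_i/dt = Σ_{j≠i} conj(μ^j)(conj(z_i) - conj(z_j))^n for a fixed even integer n ≥ 0. Then the quantity conj(μ) z - conj(μ') z' is constant in time, where z carries strength μ and z' carries strength μ'. -/
open Complex ComplexConjugate

theorem Even.sub_pow_comm {R : Type*} [Ring R] {n : ℕ} (hn : Even n) (a b : R) :
    (a - b) ^ n = (b - a) ^ n := by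
  rw [← neg_sub, hn.neg_pow]

theorem stmt7_general (μ μ' : ℂ) (n : ℕ) (hn : Even n) (z z' : ℝ → ℂ)
    (hz : ∀ t, HasDerivAt z (conj μ' * (conj (z t) - conj (z' t)) ^ n) t)
    (hz' : ∀ t, HasDerivAt z' (conj μ * (conj (z' t) - conj (z t)) ^ n) t) :
    ∀ t : ℝ, conj μ * z t - conj μ' * z' t = conj μ * z 0 - conj μ' * z' 0 := by
  -- For even `n` the two poles push each other with the same factor `(z̄ - z̄')ⁿ`.
  have hderiv : ∀ t, HasDerivAt (fun t => conj μ * z t - conj μ' * z' t) 0 t := fun t => by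
    refine (((hz t).const_mul (conj μ)).sub ((hz' t).const_mul (conj μ'))).congr_deriv ?_
    rw [hn.sub_pow_comm (conj (z' t))]
    ring
  exact fun t => is_const_of_deriv_eq_zero (fun s => (hderiv s).differentiableAt)
    (fun s => (hderiv s).deriv) t 0

/-- For two poles in a homogeneous system of even degree `n`, the quantity
`conj μ z - conj μ' z'` is conserved. -/
theorem stmt7 (μ μ' : ℂ) (n : ℕ) (hn : Even n) (z z' : ℝ → ℂ)
    (hne : ∀ t, z t ≠ z' t)
    (hz : ∀ t, HasDerivAt z (conj μ' * (conj (z t) - conj (z' t)) ^ n) t)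
    (hz' : ∀ t, HasDerivAt z' (conj μ * (conj (z' t) - conj (z t)) ^ n) t) :
    ∀ t : ℝ, conj μ * z t - conj μ' * z' t = conj μ * z 0 - conj μ' * z' 0 :=
  stmt7_general μ μ' n hn z z' hz hz'
end

section
/- Consider N poles z_1, ..., z_N : ℝ → ℂ, pairwise distinct, with fixed purely imaginary strengths μ^i, evolving by dz_i/dt = Σ_{j≠i} conj(μ^j)/(conj(z_i) - conj(z_j)). Then the Hamiltonian H = Re Σ_{i<j} μ^i μ^j log(z_i - z_j) is constant in time (for any continuous branch of log along the trajectories; equivalently, Σ_{i<j} μ^i μ^j (1/2) log|z_i - z_j|² is constant). -/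
/-!
Writing `v` for the velocities, `d/dt log ‖z i - z j‖ = Re ((v i - v j) / (z i - z j))`, and
symmetrising over pairs gives `dH/dt = -∑ i, κ i * ∑ j, κ j * Re (v i / (z i - z j))`.
Substituting the Biot–Savart law for `v i` turns the inner sum into a double sum over `(j, k)`
of `κ j * κ k * Im ((conj (z i - z k) * (z i - z j))⁻¹)`, which is antisymmetric in `(j, k)`
and therefore vanishes.
-/

open Complex ComplexConjugate

open Finset

theorem HasDerivAt.log_norm {f : ℝ → ℂ} {f' : ℂ} {t : ℝ} (hf : HasDerivAt f f' t)
    (hft : f t ≠ 0) : HasDerivAt (fun s => Real.log ‖f s‖) (f' / f t).re t := by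
  have hlog : (fun s => Real.log ‖f s‖) = fun s => Real.log (‖f s‖ ^ 2) / 2 := by
    funext s
    rw [Real.log_pow]
    ring
  rw [hlog]
  refine ((hf.norm_sq.log (by positivity)).div_const 2).congr_deriv ?_
  rw [div_re, Complex.inner, ← normSq_eq_norm_sq, mul_re, conj_re, conj_im]
  ring

theorem sum_lt_add_swap {ι M : Type*} [Fintype ι] [LinearOrder ι] [AddCommMonoid M]
    (F : ι → ι → M) (hF : ∀ i, F i i = 0) :
    ∑ i, ∑ j with i < j, (F i j + F j i) = ∑ i, ∑ j, F i j := by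
  have hsplit : ∀ i j, (if i < j then F i j else 0) + (if j < i then F i j else 0) = F i j := by
    intro i j
    rcases lt_trichotomy i j with h | rfl | h
    · simp [h, h.not_gt]
    · simp [hF]
    · simp [h, h.not_gt]
  have hswap : ∑ i, ∑ j with i < j, F j i = ∑ i, ∑ j with j < i, F i j :=
    Finset.sum_comm' (by simp)
  simp_rw [sum_add_distrib, hswap, ← sum_add_distrib, sum_filter, ← sum_add_distrib, hsplit]

theorem sum_sum_eq_zero_of_antisymm {ι M : Type*} [Fintype ι] [AddCommGroup M]
    [IsAddTorsionFree M] {G : ι → ι → M} (hG : ∀ j k, G k j = -G j k) :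
    ∑ j, ∑ k, G j k = 0 := by
  refine self_eq_neg.mp ?_
  calc ∑ j, ∑ k, G j k = ∑ k, ∑ j, G j k := sum_comm
    _ = ∑ k, ∑ j, -G k j := sum_congr rfl fun k _ => sum_congr rfl fun j _ => hG k j
    _ = -∑ j, ∑ k, G j k := by simp only [sum_neg_distrib]

theorem im_inv_conj_mul_swap (x y : ℂ) : (conj y * x)⁻¹.im = -(conj x * y)⁻¹.im := by
  rw [← conj_im, map_inv₀, map_mul, conj_conj, mul_comm]

section PointVortices

variable {ι : Type*} [Fintype ι]

/-- The self-interaction term `k = i` vanishes because `x / 0 = 0`. -/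
noncomputable def vortexVelocity (κ : ι → ℝ) (a : ι → ℂ) (i : ι) : ℂ :=
  ∑ k, -(I * κ k) / conj (a i - a k)

noncomputable def vortexHamiltonian [LinearOrder ι] (κ : ι → ℝ) (a : ι → ℂ) : ℝ :=
  ∑ i, ∑ j with i < j, -(κ i * κ j * Real.log ‖a i - a j‖)

theorem re_vortexVelocity_div (κ : ι → ℝ) (a : ι → ℂ) (i j : ι) :
    (vortexVelocity κ a i / (a i - a j)).re
      = ∑ k, κ k * (conj (a i - a k) * (a i - a j))⁻¹.im := by
  rw [vortexVelocity, sum_div, re_sum]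
  refine sum_congr rfl fun k _ => ?_
  rw [show -(I * κ k) / conj (a i - a k) / (a i - a j)
      = (κ k : ℂ) * (-I * (conj (a i - a k) * (a i - a j))⁻¹) by rw [mul_inv]; ring,
    re_ofReal_mul, neg_mul, neg_re, I_mul_re, neg_neg]

theorem sum_mul_re_vortexVelocity_div_eq_zero (κ : ι → ℝ) (a : ι → ℂ) (i : ι) :
    ∑ j, κ j * (vortexVelocity κ a i / (a i - a j)).re = 0 := by
  simp_rw [re_vortexVelocity_div, mul_sum]
  refine sum_sum_eq_zero_of_antisymm fun j k => ?_
  rw [im_inv_conj_mul_swap]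
  ring

theorem sum_lt_re_vortexVelocity_sub_div_eq_zero [LinearOrder ι] (κ : ι → ℝ)
    (a : ι → ℂ) :
    ∑ i, ∑ j with i < j,
      -(κ i * κ j * ((vortexVelocity κ a i - vortexVelocity κ a j) / (a i - a j)).re) = 0 := by
  set F : ι → ι → ℝ := fun i j => κ i * κ j * (vortexVelocity κ a i / (a i - a j)).re
  have hpair : ∀ i j,
      κ i * κ j * ((vortexVelocity κ a i - vortexVelocity κ a j) / (a i - a j)).re
        = F i j + F j i := by
    intro i j
    have hswap :
        vortexVelocity κ a j / (a i - a j) = -(vortexVelocity κ a j / (a j - a i)) := by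
      rw [← div_neg, neg_sub]
    rw [sub_div, hswap, sub_neg_eq_add, add_re]
    ring
  simp_rw [hpair, sum_neg_distrib, sum_lt_add_swap F (by simp [F]), neg_eq_zero]
  exact sum_eq_zero fun i _ => by
    simp_rw [F, mul_assoc, ← mul_sum, sum_mul_re_vortexVelocity_div_eq_zero, mul_zero]

theorem hasDerivAt_vortexHamiltonian [LinearOrder ι] (κ : ι → ℝ) {z : ι → ℝ → ℂ}
    {v : ι → ℂ} {t : ℝ} (hz : ∀ i, HasDerivAt (z i) (v i) t)
    (hdist : ∀ i j, i ≠ j → z i t ≠ z j t) :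
    HasDerivAt (fun s => vortexHamiltonian κ (fun i => z i s))
      (∑ i, ∑ j with i < j, -(κ i * κ j * ((v i - v j) / (z i t - z j t)).re)) t :=
  HasDerivAt.fun_sum fun i _ => HasDerivAt.fun_sum fun j hj =>
    ((((hz i).sub (hz j)).log_norm
      (sub_ne_zero.2 (hdist i j (mem_filter.1 hj).2.ne))).const_mul _).neg

end PointVortices

/-- For point vortices (purely imaginary strengths `μ i = I * κ i`), the
Hamiltonian `H = -∑_{i<j} κ_i κ_j log |z_i - z_j|` is conserved. -/
theorem stmt8 (N : ℕ) (z : Fin N → ℝ → ℂ) (κ : Fin N → ℝ)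
    (μ : Fin N → ℂ) (hμ : ∀ i, μ i = Complex.I * (κ i : ℂ))
    (hdist : ∀ t, ∀ i j, i ≠ j → z i t ≠ z j t)
    (hode : ∀ i, ∀ t, HasDerivAt (z i)
      (∑ j ∈ Finset.univ.filter (· ≠ i),
        conj (μ j) / (conj (z i t) - conj (z j t))) t) :
    ∀ t : ℝ,
      (∑ i, ∑ j ∈ Finset.univ.filter (i < ·),
          -(κ i * κ j * Real.log (‖z i t - z j t‖)))
      = ∑ i, ∑ j ∈ Finset.univ.filter (i < ·),
          -(κ i * κ j * Real.log (‖z i 0 - z j 0‖)) := by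
  have hvel : ∀ i t,
      ∑ j ∈ univ.filter (· ≠ i), conj (μ j) / (conj (z i t) - conj (z j t))
        = vortexVelocity κ (fun k => z k t) i := by
    intro i t
    rw [vortexVelocity, sum_filter]
    refine sum_congr rfl fun k _ => ?_
    split_ifs with hk
    · rw [hμ, map_mul, conj_I, conj_ofReal, map_sub]
      ring
    · simp [not_not.1 hk]
  have hH : ∀ t, HasDerivAt (fun s => vortexHamiltonian κ (fun i => z i s)) 0 t := fun t => by
    have h := hasDerivAt_vortexHamiltonian κ (fun i => hvel i t ▸ hode i t) (hdist t)
    rwa [sum_lt_re_vortexVelocity_sub_div_eq_zero] at h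
  exact fun t => is_const_of_deriv_eq_zero (fun s => (hH s).differentiableAt)
    (fun s => (hH s).deriv) t 0
end
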